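/- arXiv:math/0501554 — 14 statements merged into one kernel-verified Lean document; each statement's English description precedes it below -/
import Mathlib

section
/- Let α, β ∈ ℂ and let f : ℤ → ℂ be a sequence with f_n ≠ 0 for all n ∈ ℤ satisfying f_{n-1} (f_n)^2 f_{n+1} = α f_n + β for all n ∈ ℤ. Then the quantity J_n = f_{n-1} f_n + α (1/f_{n-1} + 1/f_n) + β/(f_{n-1} f_n) is a conserved quantity, i.e. J_n is independent of n. -/
/-!
Writing `x, y, z` for three consecutive terms, `J(y, z) - J(x, y)` factors as
`(z - x) (x y² z - α y - β) / (x y z)`, which vanishes by the recurrence; so `J` is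
`1`-periodic on `ℤ`, hence constant.
-/

section

variable {K : Type*} [Field K]

def somosInvariant (α β x y : K) : K :=
  x * y + α * (1 / x + 1 / y) + β / (x * y)

theorem somosInvariant_eq_of_mul_sq_mul {α β x y z : K} (hx : x ≠ 0) (hy : y ≠ 0) (hz : z ≠ 0)
    (h : x * y ^ 2 * z = α * y + β) :
    somosInvariant α β y z = somosInvariant α β x y := by
  unfold somosInvariant
  field_simp
  linear_combination (z - x) * h

theorem somosInvariant_periodic {α β : K} {f : ℤ → K} (hne : ∀ n, f n ≠ 0)
    (hf : ∀ n, f (n - 1) * f n ^ 2 * f (n + 1) = α * f n + β) :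
    Function.Periodic (fun n : ℤ => somosInvariant α β (f (n - 1)) (f n)) 1 := fun n => by
  simpa using somosInvariant_eq_of_mul_sq_mul (hne _) (hne n) (hne _) (hf n)

end

/-- For a nonvanishing solution `f` of `f_{n-1} f_n^2 f_{n+1} = α f_n + β`,
the quantity `J_n = f_{n-1} f_n + α (1/f_{n-1} + 1/f_n) + β/(f_{n-1} f_n)` is conserved. -/
theorem map_somos4_conserved_J (α β : ℂ) (f : ℤ → ℂ)
    (hne : ∀ n : ℤ, f n ≠ 0)
    (hf : ∀ n : ℤ, f (n - 1) * (f n) ^ 2 * f (n + 1) = α * f n + β)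
    (J : ℤ → ℂ)
    (hJ : ∀ n : ℤ, J n = f (n - 1) * f n + α * (1 / f (n - 1) + 1 / f n)
      + β / (f (n - 1) * f n)) :
    ∀ m n : ℤ, J m = J n := by
  have hJ_eq : J = fun n => somosInvariant α β (f (n - 1)) (f n) := funext hJ
  have hconst : ∀ n, J n = J 0 := fun n => by
    simpa [hJ_eq] using (somosInvariant_periodic hne hf).int_mul_eq n
  intro m n
  rw [hconst m, hconst n]
end

section
/- Let α', β' ∈ ℂ and let τ : ℤ → ℂ be a Somos 5 sequence with coefficients α', β' such that τ_n ≠ 0 for all n ∈ ℤ. Then the sequence f_n = τ_{n+1} τ_{n-1} / (τ_n)^2 satisfies the third order nonlinear mapping f_{n-1} (f_n)^2 (f_{n+1})^2 f_{n+2} = α' f_n f_{n+1} + β' for all n ∈ ℤ. -/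
/-!
Writing each `f_k` as a ratio of `τ`'s, the telescoping products give
`f_{n-1} f_n² f_{n+1}² f_{n+2} = τ_{n+3} τ_{n-2} / (τ_n τ_{n+1})` and
`f_n f_{n+1} = τ_{n+2} τ_{n-1} / (τ_n τ_{n+1})`, so the third order map is the Somos 5
recurrence divided by `τ_n τ_{n+1}`.
-/

section RatioSequence

variable {K : Type*} [Field K] {τ f : ℤ → K}

theorem ratio_mul_ratio_eq (hne : ∀ n, τ n ≠ 0)
    (hf : ∀ n, f n = τ (n + 1) * τ (n - 1) / τ n ^ 2) (n : ℤ) :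
    f n * f (n + 1) = τ (n + 2) * τ (n - 1) / (τ n * τ (n + 1)) := by
  rw [hf, hf, show n + 1 + 1 = n + 2 by ring, show n + 1 - 1 = n by ring]
  have := hne n
  have := hne (n + 1)
  field_simp

theorem ratio_quartic_product_eq (hne : ∀ n, τ n ≠ 0)
    (hf : ∀ n, f n = τ (n + 1) * τ (n - 1) / τ n ^ 2) (n : ℤ) :
    f (n - 1) * f n ^ 2 * f (n + 1) ^ 2 * f (n + 2) =
      τ (n + 3) * τ (n - 2) / (τ n * τ (n + 1)) := by
  rw [hf (n - 1), hf n, hf (n + 1), hf (n + 2), show n - 1 + 1 = n by ring,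
    show n - 1 - 1 = n - 2 by ring, show n + 1 + 1 = n + 2 by ring, show n + 1 - 1 = n by ring,
    show n + 2 + 1 = n + 3 by ring, show n + 2 - 1 = n + 1 by ring]
  have := hne (n - 1)
  have := hne n
  have := hne (n + 1)
  have := hne (n + 2)
  field_simp

end RatioSequence

/-- For a nonvanishing Somos 5 sequence `τ` with coefficients `α', β'`,
the quantity `f_n = τ_{n+1} τ_{n-1} / τ_n ^ 2` satisfies the third order map
`f_{n-1} f_n^2 f_{n+1}^2 f_{n+2} = α' f_n f_{n+1} + β'`. -/
theorem somos5_to_third_order_map (α' β' : ℂ) (τ : ℤ → ℂ)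
    (hτ : ∀ n : ℤ, τ (n + 3) * τ (n - 2) = α' * (τ (n + 2) * τ (n - 1)) + β' * (τ (n + 1) * τ n))
    (hne : ∀ n : ℤ, τ n ≠ 0)
    (f : ℤ → ℂ) (hf : ∀ n : ℤ, f n = τ (n + 1) * τ (n - 1) / (τ n) ^ 2) :
    ∀ n : ℤ, f (n - 1) * (f n) ^ 2 * (f (n + 1)) ^ 2 * f (n + 2) = α' * (f n * f (n + 1)) + β' := by
  intro n
  have := hne n
  have := hne (n + 1)
  rw [ratio_quartic_product_eq hne hf, ratio_mul_ratio_eq hne hf, hτ]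
  field_simp
end

section
/- Let α', β' ∈ ℂ and let f : ℤ → ℂ be a sequence with f_n ≠ 0 for all n ∈ ℤ satisfying the third order nonlinear mapping f_{n-1} (f_n)^2 (f_{n+1})^2 f_{n+2} = α' f_n f_{n+1} + β' for all n ∈ ℤ. Then the quantity Ĩ_n = f_{n-1} f_n f_{n+1} + α' (1/f_{n-1} + 1/f_n + 1/f_{n+1}) + β'/(f_{n-1} f_n f_{n+1}) is a conserved quantity, i.e. Ĩ_n is independent of n. -/
/-! The map is the one-step shift `(f_{n-1}, f_n, f_{n+1}) ↦ (f_n, f_{n+1}, f_{n+2})`, and the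
difference of the invariant across one step is `(f_{n+2} - f_{n-1})` times the defining relation
divided by `f_{n-1} f_n f_{n+1} f_{n+2}`. So `Ĩ` is `1`-periodic on `ℤ`, hence constant. -/

def thirdOrderInvariant {K : Type*} [Field K] (α β a b c : K) : K :=
  a * b * c + α * (1 / a + 1 / b + 1 / c) + β / (a * b * c)

theorem thirdOrderInvariant_shift {K : Type*} [Field K] {α β a b c d : K}
    (ha : a ≠ 0) (hb : b ≠ 0) (hc : c ≠ 0) (hd : d ≠ 0)
    (h : a * b ^ 2 * c ^ 2 * d = α * (b * c) + β) :
    thirdOrderInvariant α β b c d = thirdOrderInvariant α β a b c := by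
  unfold thirdOrderInvariant
  field_simp
  linear_combination (d - a) * h

/-- For a nonvanishing solution `f` of the third order map
`f_{n-1} f_n^2 f_{n+1}^2 f_{n+2} = α' f_n f_{n+1} + β'`, the quantity
`Ĩ_n = f_{n-1} f_n f_{n+1} + α'(1/f_{n-1} + 1/f_n + 1/f_{n+1}) + β'/(f_{n-1} f_n f_{n+1})`
is conserved. -/
theorem third_order_map_conserved_I (α' β' : ℂ) (f : ℤ → ℂ)
    (hne : ∀ n : ℤ, f n ≠ 0)
    (hf : ∀ n : ℤ, f (n - 1) * (f n) ^ 2 * (f (n + 1)) ^ 2 * f (n + 2)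
      = α' * (f n * f (n + 1)) + β')
    (I : ℤ → ℂ)
    (hI : ∀ n : ℤ, I n = f (n - 1) * f n * f (n + 1)
      + α' * (1 / f (n - 1) + 1 / f n + 1 / f (n + 1))
      + β' / (f (n - 1) * f n * f (n + 1))) :
    ∀ m n : ℤ, I m = I n := by
  have hI' (n : ℤ) : I n = thirdOrderInvariant α' β' (f (n - 1)) (f n) (f (n + 1)) := hI n
  have hperiodic : Function.Periodic I 1 := fun n => by
    rw [hI', hI', add_sub_cancel_right, add_assoc, one_add_one_eq_two]
    exact thirdOrderInvariant_shift (hne _) (hne _) (hne _) (hne _) (hf n)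
  intro m n
  simpa using (hperiodic.int_mul_eq m).trans (hperiodic.int_mul_eq n).symm
end

section
/- Let α', β' ∈ ℂ and let f : ℤ → ℂ be a sequence with f_n ≠ 0 for all n ∈ ℤ satisfying the third order nonlinear mapping f_{n-1} (f_n)^2 (f_{n+1})^2 f_{n+2} = α' f_n f_{n+1} + β' for all n ∈ ℤ. Then the quantity J̃_n = f_{n-1} f_n + f_n f_{n+1} + α' (1/(f_{n-1} f_n) + 1/(f_n f_{n+1})) + β'/(f_{n-1} (f_n)^2 f_{n+1}) is a conserved quantity, i.e. J̃_n is independent of n. -/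
/-! Using the map to eliminate `β'`, both `J̃_n` and `J̃_{n+1}` reduce to
`f_{n-1} f_n + f_n f_{n+1} + f_{n+1} f_{n+2} + α' / (f_n f_{n+1})`,
so `J̃` is `1`-periodic on `ℤ`, hence constant. -/

namespace ThirdOrderMap

variable {K : Type*} [Field K]

/-- `J̃_n` as a function of the three terms `a = f_{n-1}`, `b = f_n`, `c = f_{n+1}`. -/
def invariant (α β a b c : K) : K :=
  a * b + b * c + α * (1 / (a * b) + 1 / (b * c)) + β / (a * b ^ 2 * c)

theorem invariant_eq_of_map {α β a b c d : K} (ha : a ≠ 0) (hb : b ≠ 0) (hc : c ≠ 0)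
    (h : a * b ^ 2 * c ^ 2 * d = α * (b * c) + β) :
    invariant α β a b c = a * b + b * c + c * d + α / (b * c) := by
  unfold invariant
  field_simp
  linear_combination -h

theorem invariant_shift_eq_of_map {α β a b c d : K} (hb : b ≠ 0) (hc : c ≠ 0) (hd : d ≠ 0)
    (h : a * b ^ 2 * c ^ 2 * d = α * (b * c) + β) :
    invariant α β b c d = a * b + b * c + c * d + α / (b * c) := by
  unfold invariant
  field_simp
  linear_combination -h

theorem invariant_shift {α β a b c d : K} (ha : a ≠ 0) (hb : b ≠ 0) (hc : c ≠ 0) (hd : d ≠ 0)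
    (h : a * b ^ 2 * c ^ 2 * d = α * (b * c) + β) :
    invariant α β b c d = invariant α β a b c := by
  rw [invariant_shift_eq_of_map hb hc hd h, invariant_eq_of_map ha hb hc h]

end ThirdOrderMap

/-- For a nonvanishing solution `f` of the third order map
`f_{n-1} f_n^2 f_{n+1}^2 f_{n+2} = α' f_n f_{n+1} + β'`, the quantity
`J̃_n = f_{n-1} f_n + f_n f_{n+1} + α'(1/(f_{n-1} f_n) + 1/(f_n f_{n+1}))
  + β'/(f_{n-1} f_n^2 f_{n+1})` is conserved. -/
theorem third_order_map_conserved_J (α' β' : ℂ) (f : ℤ → ℂ)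
    (hne : ∀ n : ℤ, f n ≠ 0)
    (hf : ∀ n : ℤ, f (n - 1) * (f n) ^ 2 * (f (n + 1)) ^ 2 * f (n + 2)
      = α' * (f n * f (n + 1)) + β')
    (J : ℤ → ℂ)
    (hJ : ∀ n : ℤ, J n = f (n - 1) * f n + f n * f (n + 1)
      + α' * (1 / (f (n - 1) * f n) + 1 / (f n * f (n + 1)))
      + β' / (f (n - 1) * (f n) ^ 2 * f (n + 1))) :
    ∀ m n : ℤ, J m = J n := by
  have hJ_invariant : ∀ n, J n = ThirdOrderMap.invariant α' β' (f (n - 1)) (f n) (f (n + 1)) := hJ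
  have hperiodic : Function.Periodic J 1 := fun n => by
    rw [hJ_invariant, hJ_invariant, add_sub_cancel_right, add_assoc, one_add_one_eq_two]
    exact ThirdOrderMap.invariant_shift (hne _) (hne _) (hne _) (hne _) (hf n)
  intro m n
  simpa using (hperiodic.int_mul_eq m).trans (hperiodic.int_mul_eq n).symm
end

section
/- Let α, β ∈ ℂ and let τ : ℤ → ℂ be a Somos 4 sequence with coefficients α, β such that τ_n ≠ 0 for all n ∈ ℤ. Let J be the (constant) value of J_n = f_{n-1} f_n + α (1/f_{n-1} + 1/f_n) + β/(f_{n-1} f_n), where f_n = τ_{n+1} τ_{n-1} / (τ_n)^2. Then τ is also a Somos 5 sequence with coefficients α' = −β and β' = α² + βJ, i.e. τ_{n+3} τ_{n-2} = −β τ_{n+2} τ_{n-1} + (α² + βJ) τ_{n+1} τ_n for all n ∈ ℤ. -/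
/-!
Two consecutive Somos 4 relations express `τ_{n+3} τ_{n-2} · τ_{n-1} τ_{n+2}` through the six
terms `τ_{n-2}, …, τ_{n+3}`; after clearing denominators, the conserved quantity `J` is a
quartic relation among `τ_{n-1}, …, τ_{n+2}`, and adding `β` times it turns the result into
`(-β τ_{n+2} τ_{n-1} + (α² + βJ) τ_{n+1} τ_n) · τ_{n-1} τ_{n+2}`. Cancelling the nonzero
factor `τ_{n-1} τ_{n+2}` gives the Somos 5 relation.
-/

variable {K : Type*} [Field K]

theorem somos4_invariant_eq_div (α β : K) {a b c d : K} (ha : a ≠ 0) (hb : b ≠ 0)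
    (hc : c ≠ 0) (hd : d ≠ 0) :
    c * a / b ^ 2 * (d * b / c ^ 2) + α * (1 / (c * a / b ^ 2) + 1 / (d * b / c ^ 2))
        + β / (c * a / b ^ 2 * (d * b / c ^ 2))
      = (a ^ 2 * d ^ 2 + α * (b ^ 3 * d + c ^ 3 * a) + β * (b ^ 2 * c ^ 2)) / (a * b * c * d) := by
  field_simp

theorem somos5_of_somos4_of_invariant {α β J t₀ t₁ t₂ t₃ t₄ t₅ : K}
    (h₀ : t₄ * t₀ = α * (t₃ * t₁) + β * t₂ ^ 2)
    (h₁ : t₅ * t₁ = α * (t₄ * t₂) + β * t₃ ^ 2)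
    (hJ : t₁ ^ 2 * t₄ ^ 2 + α * (t₂ ^ 3 * t₄ + t₃ ^ 3 * t₁) + β * (t₂ ^ 2 * t₃ ^ 2)
      = J * (t₁ * t₂ * t₃ * t₄))
    (h₁₄ : t₁ * t₄ ≠ 0) :
    t₅ * t₀ = -β * (t₄ * t₁) + (α ^ 2 + β * J) * (t₃ * t₂) := by
  refine mul_right_cancel₀ h₁₄ ?_
  linear_combination t₄ * t₀ * h₁ + (α * t₄ * t₂ + β * t₃ ^ 2) * h₀ + β * hJ

/-- Every nonvanishing Somos 4 sequence with coefficients `α, β` is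
also a Somos 5 sequence, with coefficients `α' = -β` and `β' = α^2 + β*J`,
where `J` is the conserved quantity of the associated second order map. -/
theorem somos4_is_somos5 (α β : ℂ) (τ : ℤ → ℂ)
    (hτ : ∀ n : ℤ, τ (n + 2) * τ (n - 2) = α * (τ (n + 1) * τ (n - 1)) + β * (τ n) ^ 2)
    (hne : ∀ n : ℤ, τ n ≠ 0)
    (f : ℤ → ℂ) (hf : ∀ n : ℤ, f n = τ (n + 1) * τ (n - 1) / (τ n) ^ 2)
    (J : ℂ)
    (hJ : ∀ n : ℤ, f (n - 1) * f n + α * (1 / f (n - 1) + 1 / f n)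
      + β / (f (n - 1) * f n) = J) :
    ∀ n : ℤ, τ (n + 3) * τ (n - 2)
      = (-β) * (τ (n + 2) * τ (n - 1)) + (α ^ 2 + β * J) * (τ (n + 1) * τ n) := by
  intro n
  have hτ' : τ (n + 3) * τ (n - 1) = α * (τ (n + 2) * τ n) + β * τ (n + 1) ^ 2 := by
    have h := hτ (n + 1)
    rwa [show n + 1 + 2 = n + 3 by ring, show n + 1 - 2 = n - 1 by ring,
      show n + 1 + 1 = n + 2 by ring, add_sub_cancel_right] at h
  have hinv := hJ (n + 1)
  rw [add_sub_cancel_right, hf n, hf (n + 1), add_sub_cancel_right,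
    show n + 1 + 1 = n + 2 by ring, somos4_invariant_eq_div α β (hne _) (hne _) (hne _) (hne _),
    div_eq_iff (by simp [hne])] at hinv
  exact somos5_of_somos4_of_invariant (hτ n) hτ' hinv (mul_ne_zero (hne _) (hne _))
end

section
/- Let α, β ∈ ℂ and let τ : ℤ → ℂ be a Somos 4 sequence with coefficients α, β such that τ_n ≠ 0 for all n ∈ ℤ, let f_n = τ_{n+1} τ_{n-1} / (τ_n)^2, and let J be the (constant) value of J_n = f_{n-1} f_n + α (1/f_{n-1} + 1/f_n) + β/(f_{n-1} f_n). Set α' = −β and β' = α² + βJ. Then for all n ∈ ℤ: f_{n-1} f_n f_{n+1} + α' (1/f_{n-1} + 1/f_n + 1/f_{n+1}) + β'/(f_{n-1} f_n f_{n+1}) = 2α, and f_{n-1} f_n + f_n f_{n+1} + α' (1/(f_{n-1} f_n) + 1/(f_n f_{n+1})) + β'/(f_{n-1} (f_n)^2 f_{n+1}) = J. -/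
/-!
Dividing the Somos 4 recurrence by `τ_{n-1}^2 τ_n^2 τ_{n+1}^2` turns it into the QRT relation
`f_{n-1} f_n^2 f_{n+1} = α f_n + β`. Both Somos 5 invariants, once denominators are cleared,
become polynomials in `a = f_{n-1}, b = f_n, c = f_{n+1}` lying in the ideal generated by this
relation and by `a^2 b^2 + α (a + b) + β - a b J`, the cleared form of the Somos 4 invariant.
-/

section QRT

variable {K : Type*} [Field K] {α β J a b c : K}

theorem somos4_ratio_qrt {τ f : ℤ → K}
    (hτ : ∀ n : ℤ, τ (n + 2) * τ (n - 2) = α * (τ (n + 1) * τ (n - 1)) + β * (τ n) ^ 2)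
    (hne : ∀ n : ℤ, τ n ≠ 0) (hf : ∀ n : ℤ, f n = τ (n + 1) * τ (n - 1) / (τ n) ^ 2)
    (n : ℤ) : f (n - 1) * f n ^ 2 * f (n + 1) = α * f n + β := by
  have hτn := hne n
  have hτsucc := hne (n + 1)
  have hτsucc2 := hne (n + 2)
  have hτpred := hne (n - 1)
  have hτpred2 := hne (n - 2)
  rw [hf (n - 1), hf n, hf (n + 1), sub_add_cancel, add_sub_cancel_right,
    show n - 1 - 1 = n - 2 by ring, show n + 1 + 1 = n + 2 by ring]
  field_simp
  linear_combination hτ n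

theorem somos4_invariant_cleared (ha : a ≠ 0) (hb : b ≠ 0)
    (hJ : a * b + α * (1 / a + 1 / b) + β / (a * b) = J) :
    a ^ 2 * b ^ 2 + α * a + α * b + β - a * b * J = 0 := by
  field_simp at hJ
  linear_combination hJ

theorem somos5_first_invariant_of_qrt (ha : a ≠ 0) (hb : b ≠ 0) (hc : c ≠ 0)
    (hqrt : a * b ^ 2 * c = α * b + β)
    (hJ : a * b + α * (1 / a + 1 / b) + β / (a * b) = J) :
    a * b * c + -β * (1 / a + 1 / b + 1 / c) + (α ^ 2 + β * J) / (a * b * c) = 2 * α := by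
  have hK := somos4_invariant_cleared ha hb hJ
  have hcleared : a * b * (a ^ 2 * b ^ 2 * c ^ 2 - β * (a * b + a * c + b * c)
      + β * J + α ^ 2 - 2 * α * (a * b * c)) = 0 := by
    linear_combination (a ^ 2 * b * c - α * a - β) * hqrt - β * hK
  field_simp
  linear_combination (mul_eq_zero.mp hcleared).resolve_left (mul_ne_zero ha hb)

theorem somos5_second_invariant_of_qrt (ha : a ≠ 0) (hb : b ≠ 0) (hc : c ≠ 0)
    (hqrt : a * b ^ 2 * c = α * b + β)
    (hJ : a * b + α * (1 / a + 1 / b) + β / (a * b) = J) :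
    a * b + b * c + -β * (1 / (a * b) + 1 / (b * c))
      + (α ^ 2 + β * J) / (a * b ^ 2 * c) = J := by
  have hK := somos4_invariant_cleared ha hb hJ
  field_simp
  apply mul_left_cancel₀ ha
  linear_combination (a * (b * (a + c) - J) + α) * hqrt + α * hK

end QRT

/-- For a nonvanishing Somos 4 sequence viewed as a Somos 5 sequence with
`α' = -β`, `β' = α^2 + β*J`, the conserved quantities of the third order map take the
values `Ĩ = 2α` and `J̃ = J`. -/
theorem somos4_in_somos5_conserved_values (α β : ℂ) (τ : ℤ → ℂ)
    (hτ : ∀ n : ℤ, τ (n + 2) * τ (n - 2) = α * (τ (n + 1) * τ (n - 1)) + β * (τ n) ^ 2)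
    (hne : ∀ n : ℤ, τ n ≠ 0)
    (f : ℤ → ℂ) (hf : ∀ n : ℤ, f n = τ (n + 1) * τ (n - 1) / (τ n) ^ 2)
    (J : ℂ)
    (hJ : ∀ n : ℤ, f (n - 1) * f n + α * (1 / f (n - 1) + 1 / f n)
      + β / (f (n - 1) * f n) = J)
    (α' β' : ℂ) (hα' : α' = -β) (hβ' : β' = α ^ 2 + β * J) :
    ∀ n : ℤ,
      (f (n - 1) * f n * f (n + 1)
        + α' * (1 / f (n - 1) + 1 / f n + 1 / f (n + 1))
        + β' / (f (n - 1) * f n * f (n + 1)) = 2 * α) ∧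
      (f (n - 1) * f n + f n * f (n + 1)
        + α' * (1 / (f (n - 1) * f n) + 1 / (f n * f (n + 1)))
        + β' / (f (n - 1) * (f n) ^ 2 * f (n + 1)) = J) := by
  have hfne : ∀ n, f n ≠ 0 := fun n => by
    rw [hf]
    exact div_ne_zero (mul_ne_zero (hne _) (hne _)) (pow_ne_zero _ (hne _))
  intro n
  subst hα' hβ'
  have hqrt := somos4_ratio_qrt hτ hne hf n
  exact ⟨somos5_first_invariant_of_qrt (hfne _) (hfne _) (hfne _) hqrt (hJ n),
    somos5_second_invariant_of_qrt (hfne _) (hfne _) (hfne _) hqrt (hJ n)⟩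
end

section
/- Let a, b, c, d, e ∈ ℂ and let u : ℤ → ℂ be a sequence with u_n ≠ 0 and c + d u_n + e (u_n)^2 ≠ 0 for all n ∈ ℤ, satisfying the recurrence u_{n+1} u_{n-1} = (a + b u_n + c (u_n)^2)/(c + d u_n + e (u_n)^2) for all n ∈ ℤ. Then the quantity K_n = e u_{n-1} u_n + d (u_{n-1} + u_n) + c (u_{n-1}/u_n + u_n/u_{n-1}) + b (1/u_{n-1} + 1/u_n) + a/(u_{n-1} u_n) is a conserved quantity, i.e. K_n is independent of n. -/
/-!
Multiplying `K(X, Y) = k` by `XY` gives the symmetric biquadratic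
`e X²Y² + d XY(X + Y) + c(X² + Y²) + b(X + Y) + a − k XY = 0`. For fixed `Y = y` this is a
quadratic in `X` with leading coefficient `c + d y + e y²` and constant term `a + b y + c y²`,
so by Vieta the product of its two roots is exactly the right-hand side of the recurrence.
Hence `u_{n+1}` is the second root besides `u_{n-1}`, and `K(u_{n-1}, u_n) = K(u_n, u_{n+1})`.
-/

section BiquadraticInvariant

variable {F : Type*} [Field F]

def biquadraticInvariant (a b c d e x y : F) : F :=
  e * (x * y) + d * (x + y) + c * (x / y + y / x) + b * (1 / x + 1 / y) + a / (x * y)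

theorem biquadraticInvariant_eq_of_mul_eq {a b c d e x y z : F}
    (hx : x ≠ 0) (hy : y ≠ 0) (hz : z ≠ 0)
    (h : z * x * (c + d * y + e * y ^ 2) = a + b * y + c * y ^ 2) :
    biquadraticInvariant a b c d e x y = biquadraticInvariant a b c d e y z := by
  unfold biquadraticInvariant
  field_simp
  linear_combination (x - z) * h

theorem biquadraticInvariant_eq_of_mul_eq_div {a b c d e x y z : F}
    (hx : x ≠ 0) (hy : y ≠ 0) (hz : z ≠ 0)
    (h : z * x = (a + b * y + c * y ^ 2) / (c + d * y + e * y ^ 2)) :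
    biquadraticInvariant a b c d e x y = biquadraticInvariant a b c d e y z := by
  have hden : c + d * y + e * y ^ 2 ≠ 0 :=
    (div_ne_zero_iff.mp (h ▸ mul_ne_zero hz hx)).2
  exact biquadraticInvariant_eq_of_mul_eq hx hy hz (by rw [h, div_mul_cancel₀ _ hden])

end BiquadraticInvariant

theorem biquadratic_map_conserved_K_general (a b c d e : ℂ) (u : ℤ → ℂ)
    (hne : ∀ n : ℤ, u n ≠ 0)
    (hu : ∀ n : ℤ, u (n + 1) * u (n - 1)
      = (a + b * u n + c * (u n) ^ 2) / (c + d * u n + e * (u n) ^ 2))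
    (K : ℤ → ℂ)
    (hK : ∀ n : ℤ, K n = e * (u (n - 1) * u n) + d * (u (n - 1) + u n)
      + c * (u (n - 1) / u n + u n / u (n - 1))
      + b * (1 / u (n - 1) + 1 / u n) + a / (u (n - 1) * u n)) :
    ∀ m n : ℤ, K m = K n := by
  have hK' : ∀ n, K n = biquadraticInvariant a b c d e (u (n - 1)) (u n) := hK
  have hperiodic : Function.Periodic K 1 := fun n => by
    rw [hK', hK', add_sub_cancel_right]
    exact (biquadraticInvariant_eq_of_mul_eq_div (hne _) (hne _) (hne _) (hu n)).symm
  intro m n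
  simpa using (hperiodic.int_mul_eq m).trans (hperiodic.int_mul_eq n).symm

/-- The mapping `u_{n+1} u_{n-1} = (a + b u_n + c u_n^2)/(c + d u_n + e u_n^2)`
associated with a symmetric biquadratic curve has the conserved quantity
`K_n = e u_{n-1} u_n + d(u_{n-1}+u_n) + c(u_{n-1}/u_n + u_n/u_{n-1})
  + b(1/u_{n-1} + 1/u_n) + a/(u_{n-1} u_n)`. -/
theorem biquadratic_map_conserved_K (a b c d e : ℂ) (u : ℤ → ℂ)
    (hne : ∀ n : ℤ, u n ≠ 0)
    (hden : ∀ n : ℤ, c + d * u n + e * (u n) ^ 2 ≠ 0)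
    (hu : ∀ n : ℤ, u (n + 1) * u (n - 1)
      = (a + b * u n + c * (u n) ^ 2) / (c + d * u n + e * (u n) ^ 2))
    (K : ℤ → ℂ)
    (hK : ∀ n : ℤ, K n = e * (u (n - 1) * u n) + d * (u (n - 1) + u n)
      + c * (u (n - 1) / u n + u n / u (n - 1))
      + b * (1 / u (n - 1) + 1 / u n) + a / (u (n - 1) * u n)) :
    ∀ m n : ℤ, K m = K n :=
  biquadratic_map_conserved_K_general a b c d e u hne hu K hK
end

section
/- Let α', β' ∈ ℂ and let τ : ℤ → ℂ be a Somos 5 sequence with coefficients α', β' such that τ_n ≠ 0 for all n ∈ ℤ. Then the sequence h_n = τ_{n+2} τ_{n-1}/(τ_{n+1} τ_n) satisfies the second order nonlinear mapping h_{n-1} h_n h_{n+1} = α' h_n + β' for all n ∈ ℤ. -/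
/-! The product `h_{n-1} h_n h_{n+1}` telescopes to `τ_{n+3} τ_{n-2} / (τ_{n+1} τ_n)`, and the
Somos 5 recurrence rewrites this numerator as `α' τ_{n+2} τ_{n-1} + β' τ_{n+1} τ_n`, which divided
by `τ_{n+1} τ_n` is `α' h_n + β'`. -/

namespace Somos5

variable {K : Type*} [Field K]

def ratio (τ : ℤ → K) (n : ℤ) : K := τ (n + 2) * τ (n - 1) / (τ (n + 1) * τ n)

theorem ratio_mul_ratio_mul_ratio {τ : ℤ → K} (hne : ∀ n, τ n ≠ 0) (n : ℤ) :
    ratio τ (n - 1) * ratio τ n * ratio τ (n + 1) = τ (n + 3) * τ (n - 2) / (τ (n + 1) * τ n) := by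
  have := hne (n - 1); have := hne n; have := hne (n + 1); have := hne (n + 2)
  simp only [ratio, show n - 1 + 2 = n + 1 by ring, show n - 1 - 1 = n - 2 by ring,
    show n - 1 + 1 = n by ring, show n + 1 + 2 = n + 3 by ring, show n + 1 - 1 = n by ring,
    show n + 1 + 1 = n + 2 by ring]
  field_simp

theorem mul_ratio_add {τ : ℤ → K} (hne : ∀ n, τ n ≠ 0) (α β : K) (n : ℤ) :
    α * ratio τ n + β = (α * (τ (n + 2) * τ (n - 1)) + β * (τ (n + 1) * τ n)) / (τ (n + 1) * τ n) := by
  have := hne n; have := hne (n + 1)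
  rw [ratio]
  field_simp

end Somos5

/-- For a nonvanishing Somos 5 sequence `τ` with coefficients `α', β'`,
the quantity `h_n = τ_{n+2} τ_{n-1}/(τ_{n+1} τ_n)` satisfies the second order map
`h_{n-1} h_n h_{n+1} = α' h_n + β'`. -/
theorem somos5_to_h_map (α' β' : ℂ) (τ : ℤ → ℂ)
    (hτ : ∀ n : ℤ, τ (n + 3) * τ (n - 2) = α' * (τ (n + 2) * τ (n - 1)) + β' * (τ (n + 1) * τ n))
    (hne : ∀ n : ℤ, τ n ≠ 0)
    (h : ℤ → ℂ) (hh : ∀ n : ℤ, h n = τ (n + 2) * τ (n - 1) / (τ (n + 1) * τ n)) :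
    ∀ n : ℤ, h (n - 1) * h n * h (n + 1) = α' * h n + β' := by
  obtain rfl : h = Somos5.ratio τ := funext hh
  intro n
  rw [Somos5.ratio_mul_ratio_mul_ratio hne, hτ, Somos5.mul_ratio_add hne]
end

section
/- Let α', β' ∈ ℂ and let h : ℤ → ℂ be a sequence with h_n ≠ 0 for all n ∈ ℤ satisfying the second order nonlinear mapping h_{n-1} h_n h_{n+1} = α' h_n + β' for all n ∈ ℤ. Then the quantity J̃_n = h_{n-1} + h_n + α' (1/h_{n-1} + 1/h_n) + β'/(h_{n-1} h_n) is a conserved quantity, i.e. J̃_n is independent of n. -/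
/-!
Writing `x, y, z` for `h_{n-1}, h_n, h_{n+1}`, the difference `J̃_{n+1} - J̃_n` factors as
`(z - x) (1 - (α' y + β') / (x y z))`, and the map says exactly that the second factor vanishes.
-/

noncomputable def mapInvariant (α β x y : ℂ) : ℂ :=
  x + y + α * (1 / x + 1 / y) + β / (x * y)

theorem mapInvariant_step {α β x y z : ℂ} (hx : x ≠ 0) (hy : y ≠ 0) (hz : z ≠ 0)
    (hmap : x * y * z = α * y + β) :
    mapInvariant α β y z = mapInvariant α β x y := by
  unfold mapInvariant
  field_simp
  linear_combination (z - x) * hmap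

/-- For a nonvanishing solution `h` of `h_{n-1} h_n h_{n+1} = α' h_n + β'`,
the quantity `J̃_n = h_{n-1} + h_n + α'(1/h_{n-1} + 1/h_n) + β'/(h_{n-1} h_n)` is
conserved. -/
theorem h_map_conserved_J (α' β' : ℂ) (h : ℤ → ℂ)
    (hne : ∀ n : ℤ, h n ≠ 0)
    (hmap : ∀ n : ℤ, h (n - 1) * h n * h (n + 1) = α' * h n + β')
    (J : ℤ → ℂ)
    (hJ : ∀ n : ℤ, J n = h (n - 1) + h n + α' * (1 / h (n - 1) + 1 / h n)
      + β' / (h (n - 1) * h n)) :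
    ∀ m n : ℤ, J m = J n := by
  have hJ_inv (n : ℤ) : J n = mapInvariant α' β' (h (n - 1)) (h n) := hJ n
  have hperiodic : Function.Periodic J 1 := fun n => by
    rw [hJ_inv, hJ_inv, add_sub_cancel_right]
    exact mapInvariant_step (hne _) (hne _) (hne _) (hmap n)
  intro m n
  simpa using (hperiodic.int_mul_eq m).trans (hperiodic.int_mul_eq n).symm
end

section
/- Let α', β' ∈ ℂ and let h : ℤ → ℂ be a sequence with h_n ≠ 0 for all n ∈ ℤ such that h_{n+1} ≠ h_{n-1} for all n ∈ ℤ. If the quantity J̃_n = h_{n-1} + h_n + α' (1/h_{n-1} + 1/h_n) + β'/(h_{n-1} h_n) is independent of n, then h satisfies the second order nonlinear mapping h_{n-1} h_n h_{n+1} = α' h_n + β' for all n ∈ ℤ. -/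
/-!
The difference of consecutive values factors as
`J̃_{n+1} - J̃_n = (h_{n+1} - h_{n-1}) (h_{n-1} h_n h_{n+1} - α' h_n - β') / (h_{n-1} h_n h_{n+1})`,
so when `J̃` is constant and `h_{n+1} ≠ h_{n-1}` the second factor vanishes.
-/

section

variable {K : Type*} [Field K]

/-- The quantity `J̃` evaluated on a pair of consecutive terms `a = h_{n-1}`, `b = h_n`. -/
def pairInvariant (α β a b : K) : K :=
  a + b + α * (1 / a + 1 / b) + β / (a * b)

theorem pairInvariant_sub_pairInvariant (α β : K) {a b c : K}
    (ha : a ≠ 0) (hb : b ≠ 0) (hc : c ≠ 0) :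
    pairInvariant α β b c - pairInvariant α β a b
      = (c - a) * (a * b * c - (α * b + β)) / (a * b * c) := by
  unfold pairInvariant
  field_simp
  ring

theorem mul_mul_eq_of_pairInvariant_eq (α β : K) {a b c : K}
    (ha : a ≠ 0) (hb : b ≠ 0) (hc : c ≠ 0) (hca : c ≠ a)
    (heq : pairInvariant α β a b = pairInvariant α β b c) :
    a * b * c = α * b + β := by
  have hdiff := pairInvariant_sub_pairInvariant α β ha hb hc
  rw [heq, sub_self, eq_comm, div_eq_zero_iff] at hdiff
  rcases hdiff with hprod | hdenom
  · exact sub_eq_zero.mp ((mul_eq_zero.mp hprod).resolve_left (sub_ne_zero.mpr hca))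
  · exact absurd hdenom (by positivity)

end

/-- Conversely, if `h` is a nonvanishing sequence with `h_{n+1} ≠ h_{n-1}`
for all `n` and the quantity `J̃_n = h_{n-1} + h_n + α'(1/h_{n-1} + 1/h_n) + β'/(h_{n-1} h_n)`
is independent of `n`, then `h` satisfies `h_{n-1} h_n h_{n+1} = α' h_n + β'`. -/
theorem conserved_J_implies_h_map (α' β' : ℂ) (h : ℤ → ℂ)
    (hne : ∀ n : ℤ, h n ≠ 0)
    (hsep : ∀ n : ℤ, h (n + 1) ≠ h (n - 1))
    (J : ℤ → ℂ)
    (hJ : ∀ n : ℤ, J n = h (n - 1) + h n + α' * (1 / h (n - 1) + 1 / h n)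
      + β' / (h (n - 1) * h n))
    (hconst : ∀ m n : ℤ, J m = J n) :
    ∀ n : ℤ, h (n - 1) * h n * h (n + 1) = α' * h n + β' := by
  intro n
  have hJ' : ∀ m : ℤ, J m = pairInvariant α' β' (h (m - 1)) (h m) := hJ
  have hstep := hconst n (n + 1)
  rw [hJ', hJ', add_sub_cancel_right] at hstep
  exact mul_mul_eq_of_pairInvariant_eq α' β' (hne _) (hne n) (hne _) (hsep n) hstep
end

section
/- Let α', β' ∈ ℂ and let h : ℤ → ℂ be a sequence with h_n ≠ 0 for all n ∈ ℤ satisfying h_{n-1} h_n h_{n+1} = α' h_n + β' for all n ∈ ℤ, and let J̃ denote the (constant) value of J̃_n = h_{n-1} + h_n + α' (1/h_{n-1} + 1/h_n) + β'/(h_{n-1} h_n). Then for every n ∈ ℤ the point (X, Y) = (h_{n-1}, h_n) lies on the cubic curve (X + Y − J̃)(XY + α') + β' + α' J̃ = 0, i.e. (h_{n-1} + h_n − J̃)(h_{n-1} h_n + α') + β' + α' J̃ = 0 for all n ∈ ℤ. -/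
/-- For a nonvanishing solution `h` of `h_{n-1} h_n h_{n+1} = α' h_n + β'`
with conserved quantity `J̃`, the point `(X,Y) = (h_{n-1}, h_n)` lies on the cubic curve
`(X + Y - J̃)(XY + α') + β' + α' J̃ = 0` for all `n`. -/
theorem h_map_invariant_curve (α' β' : ℂ) (h : ℤ → ℂ)
    (hne : ∀ n : ℤ, h n ≠ 0)
    (hmap : ∀ n : ℤ, h (n - 1) * h n * h (n + 1) = α' * h n + β')
    (J : ℂ)
    (hJ : ∀ n : ℤ, h (n - 1) + h n + α' * (1 / h (n - 1) + 1 / h n)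
      + β' / (h (n - 1) * h n) = J) :
    ∀ n : ℤ, (h (n - 1) + h n - J) * (h (n - 1) * h n + α') + β' + α' * J = 0 := by
  intro n
  have ha := hne (n - 1)
  have hb := hne n
  rw [← hJ n]
  field_simp
  ring
end

section
/- Let α', β' ∈ ℂ and let τ : ℤ → ℂ be a Somos 5 sequence with coefficients α', β' such that τ_n ≠ 0 for all n ∈ ℤ. Let h_n = τ_{n+2} τ_{n-1}/(τ_{n+1} τ_n) and let J̃ be the (constant) value of J̃_n = h_{n-1} + h_n + α' (1/h_{n-1} + 1/h_n) + β'/(h_{n-1} h_n). Then both the even-index subsequence τ*_n = τ_{2n} and the odd-index subsequence τ*_n = τ_{2n+1} satisfy the Somos 4 recurrence τ*_{n+2} τ*_{n-2} = α* τ*_{n+1} τ*_{n-1} + β* (τ*_n)^2 for all n ∈ ℤ, with coefficients α* = (β')² and β* = α' (2(β')² + α' β' J̃ + (α')³). -/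
private lemma somos_key (α' β' J A B P Q R S T U V : ℂ)
    (hP : P ≠ 0) (hQ : Q ≠ 0) (hR : R ≠ 0) (hS : S ≠ 0) (hT : T ≠ 0)
    (e1 : S * A = α' * (R * B) + β' * (Q * P))
    (e2 : T * B = α' * (S * P) + β' * (R * Q))
    (e3 : U * P = α' * (T * Q) + β' * (S * R))
    (e4 : V * Q = α' * (U * R) + β' * (T * S))
    (eJ : S * P / (R * Q) + T * Q / (S * R)
        + α' * (1 / (S * P / (R * Q)) + 1 / (T * Q / (S * R)))
        + β' / (S * P / (R * Q) * (T * Q / (S * R))) = J) :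
    V * A = β' ^ 2 * (T * P) + α' * (2 * β' ^ 2 + α' * β' * J + α' ^ 3) * R ^ 2 := by
  have t1 : S * P / (R * Q) * (R * Q * S * P * T) = S ^ 2 * P ^ 2 * T := by
    field_simp
  have t2 : T * Q / (S * R) * (R * Q * S * P * T) = T ^ 2 * Q ^ 2 * P := by
    field_simp
  have t3 : 1 / (S * P / (R * Q)) * (R * Q * S * P * T) = R ^ 2 * Q ^ 2 * T := by
    rw [one_div_div]; field_simp
  have t4 : 1 / (T * Q / (S * R)) * (R * Q * S * P * T) = S ^ 2 * R ^ 2 * P := by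
    rw [one_div_div]; field_simp
  have t5 : β' / (S * P / (R * Q) * (T * Q / (S * R))) * (R * Q * S * P * T)
      = β' * (R ^ 3 * Q * S) := by
    rw [div_mul_div_comm]; field_simp
  have eJ' : S ^ 2 * P ^ 2 * T + T ^ 2 * Q ^ 2 * P
      + α' * (R ^ 2 * Q ^ 2 * T + S ^ 2 * R ^ 2 * P) + β' * (R ^ 3 * Q * S)
      = J * (R * Q * S * P * T) := by
    linear_combination (R * Q * S * P * T) * eJ - t1 - t2 - α' * t3 - α' * t4 - t5
  have hQSPT : Q * S * P * T ≠ 0 :=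
    mul_ne_zero (mul_ne_zero (mul_ne_zero hQ hS) hP) hT
  have main : V * A * (Q * S * P * T)
      = (β' ^ 2 * (T * P) + α' * (2 * β' ^ 2 + α' * β' * J + α' ^ 3) * R ^ 2)
        * (Q * S * P * T) := by
    linear_combination (A * S * P * T) * e4 + ((α' * (U * R) + β' * (T * S)) * P * T) * e1
      + (α' ^ 2 * R ^ 2 * (T * B) + α' * β' * R * Q * P * T) * e3
      + (α' ^ 2 * R ^ 2 * (α' * (T * Q) + β' * (S * R)) + α' * β' * S * R * P * T) * e2
      + α' ^ 2 * β' * R * eJ'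
  exact mul_right_cancel₀ hQSPT main

/-- For a nonvanishing Somos 5 sequence `τ` with coefficients `α', β'`
and conserved quantity `J̃` of the associated map for `h_n = τ_{n+2} τ_{n-1}/(τ_{n+1} τ_n)`,
both the even-index subsequence `τ_{2n}` and the odd-index subsequence `τ_{2n+1}` satisfy
the Somos 4 recurrence with coefficients `α* = β'^2`, `β* = α'(2 β'^2 + α' β' J̃ + α'^3)`. -/
theorem somos5_subsequences_somos4 (α' β' : ℂ) (τ : ℤ → ℂ)
    (hτ : ∀ n : ℤ, τ (n + 3) * τ (n - 2) = α' * (τ (n + 2) * τ (n - 1)) + β' * (τ (n + 1) * τ n))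
    (hne : ∀ n : ℤ, τ n ≠ 0)
    (h : ℤ → ℂ) (hh : ∀ n : ℤ, h n = τ (n + 2) * τ (n - 1) / (τ (n + 1) * τ n))
    (J : ℂ)
    (hJ : ∀ n : ℤ, h (n - 1) + h n + α' * (1 / h (n - 1) + 1 / h n)
      + β' / (h (n - 1) * h n) = J)
    (αs βs : ℂ) (hαs : αs = β' ^ 2) (hβs : βs = α' * (2 * β' ^ 2 + α' * β' * J + α' ^ 3)) :
    (∀ n : ℤ, τ (2 * (n + 2)) * τ (2 * (n - 2))
        = αs * (τ (2 * (n + 1)) * τ (2 * (n - 1))) + βs * (τ (2 * n)) ^ 2) ∧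
    (∀ n : ℤ, τ (2 * (n + 2) + 1) * τ (2 * (n - 2) + 1)
        = αs * (τ (2 * (n + 1) + 1) * τ (2 * (n - 1) + 1)) + βs * (τ (2 * n + 1)) ^ 2) := by
  have key : ∀ m : ℤ, τ (m + 4) * τ (m - 4)
      = β' ^ 2 * (τ (m + 2) * τ (m - 2))
        + α' * (2 * β' ^ 2 + α' * β' * J + α' ^ 3) * τ m ^ 2 := by
    intro m
    have e1 := hτ (m - 2)
    have e2 := hτ (m - 1)
    have e3 := hτ m
    have e4 := hτ (m + 1)
    have eJ := hJ m
    rw [hh (m - 1), hh m] at eJ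
    rw [show m - 2 + 3 = m + 1 by ring, show m - 2 - 2 = m - 4 by ring,
      show m - 2 + 2 = m by ring, show m - 2 - 1 = m - 3 by ring,
      show m - 2 + 1 = m - 1 by ring] at e1
    rw [show m - 1 + 3 = m + 2 by ring, show m - 1 - 2 = m - 3 by ring,
      show m - 1 + 2 = m + 1 by ring, show m - 1 - 1 = m - 2 by ring,
      show m - 1 + 1 = m by ring] at e2
    rw [show m + 1 + 3 = m + 4 by ring, show m + 1 - 2 = m - 1 by ring,
      show m + 1 + 2 = m + 3 by ring, show m + 1 - 1 = m by ring,
      show m + 1 + 1 = m + 2 by ring] at e4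
    rw [show m - 1 + 2 = m + 1 by ring, show m - 1 - 1 = m - 2 by ring,
      show m - 1 + 1 = m by ring] at eJ
    exact somos_key α' β' J (τ (m - 4)) (τ (m - 3)) (τ (m - 2)) (τ (m - 1)) (τ m)
      (τ (m + 1)) (τ (m + 2)) (τ (m + 3)) (τ (m + 4))
      (hne _) (hne _) (hne _) (hne _) (hne _) e1 e2 e3 e4 eJ
  subst hαs hβs
  refine ⟨fun n => ?_, fun n => ?_⟩
  · rw [show 2 * (n + 2) = 2 * n + 4 by ring, show 2 * (n - 2) = 2 * n - 4 by ring,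
      show 2 * (n + 1) = 2 * n + 2 by ring, show 2 * (n - 1) = 2 * n - 2 by ring]
    exact key (2 * n)
  · rw [show 2 * (n + 2) + 1 = 2 * n + 1 + 4 by ring, show 2 * (n - 2) + 1 = 2 * n + 1 - 4 by ring,
      show 2 * (n + 1) + 1 = 2 * n + 1 + 2 by ring, show 2 * (n - 1) + 1 = 2 * n + 1 - 2 by ring]
    exact key (2 * n + 1)
end

section
/- Let a : ℤ → ℚ be a sequence satisfying the Hankel determinant relation a_{n+m} a_{n−m} = (a_m)² a_{n+1} a_{n−1} − a_{m+1} a_{m−1} (a_n)² for all m, n ∈ ℤ, with a_0 = 0, a_1 = 1, a_2, a_3, a_4 integers and a_2 dividing a_4 (in particular a_2 ≠ 0). Then a_n is an integer for every n ≥ 0. -/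
/-- An elliptic divisibility sequence, i.e. a sequence `a : ℤ → ℚ`
satisfying the Hankel determinant relation with `a 0 = 0`, `a 1 = 1`, `a 2, a 3, a 4`
integers, `a 2 ≠ 0` and `a 2` dividing `a 4` in the integers, takes integer values
at all `n ≥ 0`. -/
theorem eds_integrality (a : ℤ → ℚ)
    (hankel : ∀ m n : ℤ, a (n + m) * a (n - m)
      = (a m) ^ 2 * (a (n + 1) * a (n - 1)) - a (m + 1) * a (m - 1) * (a n) ^ 2)
    (h0 : a 0 = 0) (h1 : a 1 = 1)
    (h2 : ∃ z : ℤ, a 2 = (z : ℚ)) (h3 : ∃ z : ℤ, a 3 = (z : ℚ))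
    (h4 : ∃ z : ℤ, a 4 = (z : ℚ))
    (h2ne : a 2 ≠ 0)
    (hdvd : ∃ c : ℤ, a 4 = a 2 * (c : ℚ)) :
    ∀ n : ℤ, 0 ≤ n → ∃ z : ℤ, a n = (z : ℚ) := by
  obtain ⟨z2, hz2⟩ := h2
  obtain ⟨z3, hz3⟩ := h3
  obtain ⟨c, hc⟩ := hdvd
  have key : ∀ k : ℕ, (∃ z : ℤ, a (k : ℤ) = (z : ℚ)) ∧
      (k % 2 = 0 → ∃ z : ℤ, a (k : ℤ) = a 2 * (z : ℚ)) := by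
    intro k
    induction k using Nat.strong_induction_on with
    | _ k ih =>
      match k with
      | 0 => exact ⟨⟨0, by simpa using h0⟩, fun _ => ⟨0, by simpa using h0⟩⟩
      | 1 => exact ⟨⟨1, by simpa using h1⟩, by omega⟩
      | 2 => exact ⟨⟨z2, by exact_mod_cast hz2⟩, fun _ => ⟨1, by push_cast; simp⟩⟩
      | 3 => exact ⟨⟨z3, by exact_mod_cast hz3⟩, by omega⟩
      | 4 =>
        constructor
        · exact ⟨z2 * c, by push_cast [show ((4:ℕ):ℤ) = 4 by norm_num]; rw [hc, hz2]⟩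
        · exact fun _ => ⟨c, by push_cast [show ((4:ℕ):ℤ) = 4 by norm_num]; exact hc⟩
      | (j + 5) =>
        rcases Nat.even_or_odd j with ⟨m, hm⟩ | ⟨m, hm⟩
        · -- k = 2m + 5, odd
          subst hm
          obtain ⟨w1, hw1⟩ := (ih (m + 1) (by omega)).1
          obtain ⟨w2, hw2⟩ := (ih (m + 2) (by omega)).1
          obtain ⟨w3, hw3⟩ := (ih (m + 3) (by omega)).1
          obtain ⟨w4, hw4⟩ := (ih (m + 4) (by omega)).1
          push_cast at hw1 hw2 hw3 hw4 ⊢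
          simp only [show (m:ℤ)+(m:ℤ)+5 = 2*(m:ℤ)+5 from by ring]
          have h := hankel ((m : ℤ) + 2) ((m : ℤ) + 3)
          simp only [show ((m:ℤ)+3) + ((m:ℤ)+2) = 2*(m:ℤ)+5 from by ring,
            show ((m:ℤ)+3) - ((m:ℤ)+2) = 1 from by ring,
            show ((m:ℤ)+3) + 1 = (m:ℤ)+4 from by ring,
            show ((m:ℤ)+3) - 1 = (m:ℤ)+2 from by ring,
            show ((m:ℤ)+2) + 1 = (m:ℤ)+3 from by ring,
            show ((m:ℤ)+2) - 1 = (m:ℤ)+1 from by ring,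
            h1, hw1, hw2, hw3, hw4] at h
          constructor
          · refine ⟨w2 ^ 2 * (w4 * w2) - w3 * w1 * w3 ^ 2, ?_⟩
            push_cast
            linear_combination h
          · omega
        · -- k = 2m + 6, even
          subst hm
          have key6 : ∀ X : ℚ, a (2*(m:ℤ)+6) * a 2 = a 2 * X * a 2 →
              a (2*(m:ℤ)+6) = a 2 * X := by
            intro X hX
            exact mul_right_cancel₀ h2ne hX
          have h := hankel ((m : ℤ) + 2) ((m : ℤ) + 4)
          simp only [show ((m:ℤ)+4) + ((m:ℤ)+2) = 2*(m:ℤ)+6 from by ring,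
            show ((m:ℤ)+4) - ((m:ℤ)+2) = 2 from by ring,
            show ((m:ℤ)+4) + 1 = (m:ℤ)+5 from by ring,
            show ((m:ℤ)+4) - 1 = (m:ℤ)+3 from by ring,
            show ((m:ℤ)+2) + 1 = (m:ℤ)+3 from by ring,
            show ((m:ℤ)+2) - 1 = (m:ℤ)+1 from by ring] at h
          -- h : a (2m+6) * a 2 = a(m+2)^2 * (a(m+5) * a(m+3)) - a(m+3)*a(m+1)*a(m+4)^2
          rcases Nat.even_or_odd m with ⟨t, ht⟩ | ⟨t, ht⟩
          ·
            obtain ⟨p, hp⟩ := (ih (m + 2) (by omega)).2 (by omega)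
            obtain ⟨q, hq⟩ := (ih (m + 4) (by omega)).2 (by omega)
            obtain ⟨w1, hw1⟩ := (ih (m + 1) (by omega)).1
            obtain ⟨w3, hw3⟩ := (ih (m + 3) (by omega)).1
            obtain ⟨w5, hw5⟩ := (ih (m + 5) (by omega)).1
            push_cast at hp hq hw1 hw3 hw5 ⊢
            simp only [show 2*(m:ℤ)+1+5 = 2*(m:ℤ)+6 from by ring]
            have heq : a (2*(m:ℤ)+6) = a 2 * ((p:ℚ)^2 * ((w5:ℚ) * w3) - (w3:ℚ) * w1 * (q:ℚ)^2) := by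
              apply key6
              rw [h, hp, hq, hw1, hw3, hw5]; ring
            constructor
            · exact ⟨z2 * (p^2 * (w5 * w3) - w3 * w1 * q^2), by rw [heq, hz2]; push_cast; ring⟩
            · exact fun _ => ⟨p^2 * (w5 * w3) - w3 * w1 * q^2, by rw [heq]; push_cast; ring⟩
          · -- m odd : m+1, m+3, m+5 even
            obtain ⟨p, hp⟩ := (ih (m + 1) (by omega)).2 (by omega)
            obtain ⟨w, hw⟩ := (ih (m + 3) (by omega)).2 (by omega)
            obtain ⟨q, hq⟩ := (ih (m + 5) (by omega)).2 (by omega)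
            obtain ⟨w2, hw2⟩ := (ih (m + 2) (by omega)).1
            obtain ⟨w4, hw4⟩ := (ih (m + 4) (by omega)).1
            push_cast at hp hq hw hw2 hw4 ⊢
            simp only [show 2*(m:ℤ)+1+5 = 2*(m:ℤ)+6 from by ring]
            have heq : a (2*(m:ℤ)+6) = a 2 * ((w2:ℚ)^2 * ((q:ℚ) * w) - (w:ℚ) * p * (w4:ℚ)^2) := by
              apply key6
              rw [h, hp, hq, hw, hw2, hw4]; ring
            constructor
            · exact ⟨z2 * (w2^2 * (q * w) - w * p * w4^2), by rw [heq, hz2]; push_cast; ring⟩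
            · exact fun _ => ⟨w2^2 * (q * w) - w * p * w4^2, by rw [heq]; push_cast; ring⟩
  intro n hn
  lift n to ℕ using hn
  exact (key n).1
end

section
/- Let a : ℤ → ℚ be a sequence satisfying the Hankel determinant relation a_{n+m} a_{n−m} = (a_m)² a_{n+1} a_{n−1} − a_{m+1} a_{m−1} (a_n)² for all m, n ∈ ℤ, with a_0 = 0, a_1 = 1, a_2, a_3, a_4 integers and a_2 dividing a_4 (in particular a_2 ≠ 0). Then the sequence has the divisibility property: for all integers m, n ≥ 1, if n divides m then a_n divides a_m (as integers). -/
section EDSAux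



private lemma eds_neg (a : ℤ → ℚ)
    (hankel : ∀ m n : ℤ, a (n + m) * a (n - m)
      = (a m) ^ 2 * (a (n + 1) * a (n - 1)) - a (m + 1) * a (m - 1) * (a n) ^ 2)
    (h1 : a 1 = 1) (h2ne : a 2 ≠ 0) :
    ∀ k : ℤ, a (-k) = -a k := by
  have key : ∀ m n : ℤ, a (n + m) * (a (n - m) + a (m - n)) = 0 := by
    intro m n
    have e1 := hankel m n
    have e2 := hankel n m
    have e3 : a (m + n) = a (n + m) := by rw [add_comm]
    linear_combination e1 + e2 - a (m - n) * e3
  intro k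
  rcases Int.even_or_odd k with ⟨t, ht⟩ | ⟨t, ht⟩
  · have h := key (1 - t) (1 + t)
    rw [show (1 + t) + (1 - t) = (2:ℤ) by ring, show (1 + t) - (1 - t) = t + t by ring,
      show (1 - t) - (1 + t) = -(t + t) by ring] at h
    rcases mul_eq_zero.mp h with h' | h'
    · exact absurd h' h2ne
    · rw [ht]; linarith
  · have h := key (-t) (1 + t)
    rw [show (1 + t) + -t = (1:ℤ) by ring, show (1 + t) - -t = 2*t + 1 by ring,
      show (-t) - (1 + t) = -(2*t + 1) by ring, h1, one_mul] at h
    rw [ht]; linarith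

private lemma eds_rodd (a : ℤ → ℚ)
    (hankel : ∀ m n : ℤ, a (n + m) * a (n - m)
      = (a m) ^ 2 * (a (n + 1) * a (n - 1)) - a (m + 1) * a (m - 1) * (a n) ^ 2)
    (h1 : a 1 = 1) (m : ℤ) :
    a (2*m + 1) = a (m + 2) * a m ^ 3 - a (m - 1) * a (m + 1) ^ 3 := by
  have h := hankel m (m + 1)
  rw [show m + 1 + m = 2*m + 1 by ring, show m + 1 - m = (1:ℤ) by ring,
    show m + 1 + 1 = m + 2 by ring, show m + 1 - 1 = m by ring, h1, mul_one] at h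
  linear_combination h

private lemma eds_reven (a : ℤ → ℚ)
    (hankel : ∀ m n : ℤ, a (n + m) * a (n - m)
      = (a m) ^ 2 * (a (n + 1) * a (n - 1)) - a (m + 1) * a (m - 1) * (a n) ^ 2)
    (m : ℤ) :
    a (2*m) * a 2 = a m * (a (m - 1) ^ 2 * a (m + 2) - a (m - 2) * a (m + 1) ^ 2) := by
  have h := hankel (m - 1) (m + 1)
  rw [show m + 1 + (m - 1) = 2*m by ring, show m + 1 - (m - 1) = (2:ℤ) by ring,
    show m + 1 + 1 = m + 2 by ring, show m + 1 - 1 = m by ring,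
    show m - 1 + 1 = m by ring, show m - 1 - 1 = m - 2 by ring] at h
  linear_combination h





-- B1: a 3 ≠ 0, consecutive zeros at (j, j+1) ⇒ everything ≥ j vanishes
private lemma eds_tail_of_pair (a : ℤ → ℚ)
    (hankel : ∀ m n : ℤ, a (n + m) * a (n - m)
      = (a m) ^ 2 * (a (n + 1) * a (n - 1)) - a (m + 1) * a (m - 1) * (a n) ^ 2)
    (h1 : a 1 = 1) (h3ne : a 3 ≠ 0) (j : ℤ) (hj0 : a j = 0) (hj1 : a (j + 1) = 0) :
    ∀ s : ℤ, j ≤ s → a s = 0 := by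
  have pairs : ∀ t : ℕ, a (j + t) = 0 ∧ a (j + t + 1) = 0 := by
    intro t
    induction t with
    | zero => constructor <;> simpa
    | succ t ih =>
      have hcast : j + ((t : ℤ) + 1) = j + t + 1 := by ring
      push_cast
      rw [hcast]
      refine ⟨ih.2, ?_⟩
      have h := hankel 2 (j + t + 2)
      rw [show j + (t:ℤ) + 2 + 2 = j + t + 4 by ring, show j + (t:ℤ) + 2 - 2 = j + t by ring,
        show j + (t:ℤ) + 2 + 1 = j + t + 3 by ring, show j + (t:ℤ) + 2 - 1 = j + t + 1 by ring,
        show (2:ℤ) + 1 = 3 by norm_num, show (2:ℤ) - 1 = 1 by norm_num,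
        ih.1, ih.2, h1] at h
      have h' : a 3 * a (j + t + 2) ^ 2 = 0 := by linear_combination h
      rcases mul_eq_zero.mp h' with h'' | h''
      · exact absurd h'' h3ne
      · rw [show j + (t:ℤ) + 1 + 1 = j + (t:ℤ) + 2 by ring]
        exact pow_eq_zero_iff two_ne_zero |>.mp h''
  intro s hs
  obtain ⟨t, rfl⟩ := Int.le.dest hs
  exact (pairs t).1

-- B2a: a 3 = 0 but a 4 ≠ 0 ⇒ any nonneg zero index is divisible by 3
private lemma eds_div3 (a : ℤ → ℚ)
    (hankel : ∀ m n : ℤ, a (n + m) * a (n - m)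
      = (a m) ^ 2 * (a (n + 1) * a (n - 1)) - a (m + 1) * a (m - 1) * (a n) ^ 2)
    (h1 : a 1 = 1) (h2ne : a 2 ≠ 0) (h3 : a 3 = 0) (h4ne : a 4 ≠ 0) :
    ∀ s : ℕ, a s = 0 → (3 : ℤ) ∣ (s : ℤ) := by
  intro s
  induction s using Nat.strong_induction_on with
  | _ s ih =>
    intro hs
    match s, hs with
    | 0, _ => norm_num
    | 1, hs => push_cast at hs; rw [h1] at hs; norm_num at hs
    | 2, hs => push_cast at hs; exact absurd hs h2ne
    | (t + 3), hs =>
      have h := hankel 3 ((t : ℤ))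
      rw [show ((t:ℤ)) + 3 = ((t + 3 : ℕ) : ℤ) by push_cast; ring] at h
      rw [hs, h3, show (3:ℤ) + 1 = 4 by norm_num, show (3:ℤ) - 1 = 2 by norm_num,
        zero_mul] at h
      have h' : a 4 * a 2 * a (t : ℤ) ^ 2 = 0 := by linear_combination h
      have ht : a (t : ℤ) = 0 := by
        rcases mul_eq_zero.mp h' with h'' | h''
        · rcases mul_eq_zero.mp h'' with h3' | h3'
          · exact absurd h3' h4ne
          · exact absurd h3' h2ne
        · exact pow_eq_zero_iff two_ne_zero |>.mp h''
      have := ih t (by omega) ht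
      omega

-- B2b: a 3 = 0 and a 4 = 0 ⇒ everything ≥ 3 vanishes
private lemma eds_tail34 (a : ℤ → ℚ)
    (hankel : ∀ m n : ℤ, a (n + m) * a (n - m)
      = (a m) ^ 2 * (a (n + 1) * a (n - 1)) - a (m + 1) * a (m - 1) * (a n) ^ 2)
    (h1 : a 1 = 1) (h2ne : a 2 ≠ 0)
    (haneg : ∀ k : ℤ, a (-k) = -a k)
    (h3 : a 3 = 0) (h4 : a 4 = 0) :
    ∀ s : ℤ, 3 ≤ s → a s = 0 := by
  have key : ∀ s : ℕ, 3 ≤ s → a s = 0 := by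
    intro s
    induction s using Nat.strong_induction_on with
    | _ s ih =>
      intro hs3
      match s, hs3 with
      | 3, _ => exact h3
      | 4, _ => exact h4
      | 5, _ =>
        have h := hankel 2 3
        rw [show (3:ℤ) + 2 = 5 by norm_num, show (3:ℤ) - 2 = 1 by norm_num,
          show (3:ℤ) + 1 = 4 by norm_num, show (3:ℤ) - 1 = 2 by norm_num,
          show (2:ℤ) + 1 = 3 by norm_num, show (2:ℤ) - 1 = 1 by norm_num,
          h3, h4, h1, mul_one] at h
        have : a 5 = 0 := by linear_combination h
        exact_mod_cast this
      | 6, _ =>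
        have h := hankel 4 2
        rw [show (2:ℤ) + 4 = 6 by norm_num, show (2:ℤ) - 4 = -2 by norm_num,
          show (2:ℤ) + 1 = 3 by norm_num, show (2:ℤ) - 1 = 1 by norm_num,
          show (4:ℤ) + 1 = 5 by norm_num, show (4:ℤ) - 1 = 3 by norm_num,
          h3, h4, haneg 2] at h
        have h' : a 6 * a 2 = 0 := by linear_combination -h
        rcases mul_eq_zero.mp h' with h'' | h''
        · exact_mod_cast h''
        · exact absurd h'' h2ne
      | (t + 7), _ =>
        rcases Nat.even_or_odd (t + 7) with ⟨i, hi⟩ | ⟨i, hi⟩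
        · -- even: s = i + i, i ≥ 4; use hankel (i-1) (i+1), needs a i = 0
          have hi3 : 3 ≤ i := by omega
          have hilt : i < t + 7 := by omega
          have hiz : a (i : ℤ) = 0 := ih i hilt (by omega)
          have h := hankel ((i:ℤ) - 1) ((i:ℤ) + 1)
          rw [show (i:ℤ) + 1 + ((i:ℤ) - 1) = ((t + 7 : ℕ) : ℤ) by push_cast; omega,
            show (i:ℤ) + 1 - ((i:ℤ) - 1) = 2 by ring,
            show (i:ℤ) + 1 + 1 = (i:ℤ) + 2 by ring,
            show (i:ℤ) + 1 - 1 = (i:ℤ) by ring,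
            show (i:ℤ) - 1 + 1 = (i:ℤ) by ring,
            hiz] at h
          have h' : a ((t + 7 : ℕ) : ℤ) * a 2 = 0 := by linear_combination h
          rcases mul_eq_zero.mp h' with h'' | h''
          · exact h''
          · exact absurd h'' h2ne
        · -- odd: s = 2i+1, i ≥ 3; use hankel i (i+1), needs a i = a (i+1) = 0
          have hiz : a (i : ℤ) = 0 := ih i (by omega) (by omega)
          have hiz1 : a ((i:ℤ) + 1) = 0 := by
            have := ih (i + 1) (by omega) (by omega)
            push_cast at this; exact this
          have h := hankel (i:ℤ) ((i:ℤ) + 1)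
          rw [show (i:ℤ) + 1 + (i:ℤ) = ((t + 7 : ℕ) : ℤ) by push_cast; omega,
            show (i:ℤ) + 1 - (i:ℤ) = 1 by ring,
            show (i:ℤ) + 1 + 1 = (i:ℤ) + 2 by ring,
            show (i:ℤ) + 1 - 1 = (i:ℤ) by ring,
            hiz, hiz1, h1, mul_one] at h
          have : a ((t + 7 : ℕ) : ℤ) = 0 := by linear_combination h
          exact this
  intro s hs
  have h0s : (0:ℤ) ≤ s := by omega
  obtain ⟨t, rfl⟩ := Int.le.dest h0s
  rw [zero_add] at *
  exact key t (by exact_mod_cast hs)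





private lemma eds_caseA (a : ℤ → ℚ)
    (hankel : ∀ m n : ℤ, a (n + m) * a (n - m)
      = (a m) ^ 2 * (a (n + 1) * a (n - 1)) - a (m + 1) * a (m - 1) * (a n) ^ 2)
    (h0 : a 0 = 0) (h1 : a 1 = 1)
    (haneg : ∀ k : ℤ, a (-k) = -a k)
    (n : ℤ) (hn : a n = 0) (hq : a (n + 1) * a (n - 1) ≠ 0) :
    ∀ K : ℕ, a (n * K) = 0 := by
  have key : ∀ K : ℕ,
      (a (n * K) = 0 ∧ a (n * K + 1) * a (n * K - 1) ≠ 0)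
      ∧ (a (n * (K + 1 : ℕ)) = 0 ∧ a (n * (K + 1 : ℕ) + 1) * a (n * (K + 1 : ℕ) - 1) ≠ 0) := by
    intro K
    induction K with
    | zero =>
      refine ⟨⟨?_, ?_⟩, ?_, ?_⟩
      · simp [h0]
      · have e1 : n * ((0:ℕ):ℤ) + 1 = 1 := by simp
        have e2 : n * ((0:ℕ):ℤ) - 1 = -1 := by simp
        rw [e1, e2, h1, haneg 1, h1]
        norm_num
      · have e : n * ((0 + 1 : ℕ):ℤ) = n := by simp
        rw [e]; exact hn
      · have e1 : n * ((0 + 1 : ℕ):ℤ) + 1 = n + 1 := by simp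
        have e2 : n * ((0 + 1 : ℕ):ℤ) - 1 = n - 1 := by simp
        rw [e1, e2]; exact hq
    | succ K ih =>
      obtain ⟨-, ih2⟩ := ih
      push_cast at ih2 ⊢
      refine ⟨ih2, ?_, ?_⟩
      · -- a (n * (K + 2)) = 0
        have h := hankel (n * ((K:ℤ) + 1)) (n * ((K:ℤ) + 1 + 1))
        rw [show n * ((K:ℤ) + 1 + 1) - n * ((K:ℤ) + 1) = n by ring, hn, mul_zero, ih2.1] at h
        have h' : a (n * ((K:ℤ) + 1) + 1) * a (n * ((K:ℤ) + 1) - 1)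
            * a (n * ((K:ℤ) + 1 + 1)) ^ 2 = 0 := by linear_combination h
        rcases mul_eq_zero.mp h' with h'' | h''
        · exact absurd h'' ih2.2
        · exact pow_eq_zero_iff two_ne_zero |>.mp h''
      · -- Q (K+2) ≠ 0
        intro hzero
        have hp := hankel n (n * ((K:ℤ) + 1) + 1)
        rw [show n * ((K:ℤ) + 1) + 1 + n = n * ((K:ℤ) + 1 + 1) + 1 by ring,
          show n * ((K:ℤ) + 1) + 1 - n = n * (K:ℤ) + 1 by ring, hn] at hp
        have hm := hankel n (n * ((K:ℤ) + 1) - 1)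
        rw [show n * ((K:ℤ) + 1) - 1 + n = n * ((K:ℤ) + 1 + 1) - 1 by ring,
          show n * ((K:ℤ) + 1) - 1 - n = n * (K:ℤ) - 1 by ring, hn] at hm
        have E : (a (n * ((K:ℤ) + 1 + 1) + 1) * a (n * ((K:ℤ) + 1 + 1) - 1))
              * (a (n * (K:ℤ) + 1) * a (n * (K:ℤ) - 1))
            = (a (n + 1) * a (n - 1)) ^ 2
              * (a (n * ((K:ℤ) + 1) + 1) * a (n * ((K:ℤ) + 1) - 1)) ^ 2 := by
          linear_combination (a (n * ((K:ℤ) + 1 + 1) - 1) * a (n * (K:ℤ) - 1)) * hp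
            + (- (a (n + 1) * a (n - 1)) * a (n * ((K:ℤ) + 1) + 1) ^ 2) * hm
        rw [hzero, zero_mul] at E
        exact mul_ne_zero (pow_ne_zero _ hq) (pow_ne_zero _ ih2.2) E.symm
  intro K
  exact (key K).1.1

private lemma eds_zmul (a : ℤ → ℚ)
    (hankel : ∀ m n : ℤ, a (n + m) * a (n - m)
      = (a m) ^ 2 * (a (n + 1) * a (n - 1)) - a (m + 1) * a (m - 1) * (a n) ^ 2)
    (h0 : a 0 = 0) (h1 : a 1 = 1) (h2ne : a 2 ≠ 0)
    (haneg : ∀ k : ℤ, a (-k) = -a k)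
    (n : ℤ) (hn3 : 3 ≤ n) (hn : a n = 0) :
    ∀ K : ℕ, a (n * K) = 0 := by
  intro K
  rcases Nat.eq_zero_or_pos K with rfl | hK
  · simp [h0]
  by_cases hq : a (n + 1) * a (n - 1) = 0
  · -- degenerate case: consecutive zeros
    have hK1 : (1:ℤ) ≤ (K:ℤ) := by exact_mod_cast hK
    have hnK : (n : ℤ) ≤ n * K := by nlinarith
    obtain ⟨j, hj0, hj1, hj3, hjn⟩ :
        ∃ j : ℤ, a j = 0 ∧ a (j + 1) = 0 ∧ 3 ≤ j ∧ j ≤ n := by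
      rcases mul_eq_zero.mp hq with h' | h'
      · exact ⟨n, hn, h', hn3, le_refl n⟩
      · refine ⟨n - 1, h', by rw [sub_add_cancel]; exact hn, ?_, by omega⟩
        rcases eq_or_lt_of_le hn3 with h3n | h3n
        · exfalso; apply h2ne; rw [show (2:ℤ) = n - 1 by omega]; exact h'
        · omega
    by_cases h3 : a 3 = 0
    · by_cases h4 : a 4 = 0
      · exact eds_tail34 a hankel h1 h2ne haneg h3 h4 (n * K) (by nlinarith)
      · exfalso
        have div3 := eds_div3 a hankel h1 h2ne h3 h4
        obtain ⟨tj, htj⟩ := Int.le.dest (show (0:ℤ) ≤ j by omega)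
        obtain ⟨tj1, htj1⟩ := Int.le.dest (show (0:ℤ) ≤ j + 1 by omega)
        have d1 := div3 tj (by rw [show ((tj:ℕ):ℤ) = j by omega]; exact hj0)
        have d2 := div3 tj1 (by rw [show ((tj1:ℕ):ℤ) = j + 1 by omega]; exact hj1)
        omega
    · exact eds_tail_of_pair a hankel h1 h3 j hj0 hj1 (n * K) (by omega)
  · exact eds_caseA a hankel h0 h1 haneg n hn hq K





private lemma eds_intN (a : ℤ → ℚ)
    (hankel : ∀ m n : ℤ, a (n + m) * a (n - m)
      = (a m) ^ 2 * (a (n + 1) * a (n - 1)) - a (m + 1) * a (m - 1) * (a n) ^ 2)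
    (h0 : a 0 = 0) (h1 : a 1 = 1) (h2ne : a 2 ≠ 0)
    (b c0 d0 : ℤ) (hb : a 2 = (b : ℚ)) (hc : a 3 = (c0 : ℚ)) (hd : a 4 = (b : ℚ) * (d0 : ℚ)) :
    ∀ N : ℕ, ∃ z : ℤ, a (N : ℤ) = (z : ℚ) ∧ (2 ∣ N → b ∣ z) := by
  have hbne : (b : ℚ) ≠ 0 := by rw [← hb]; exact h2ne
  intro N
  induction N using Nat.strong_induction_on with
  | _ N ih =>
    match N with
    | 0 => exact ⟨0, by push_cast; exact h0, fun _ => dvd_zero b⟩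
    | 1 => exact ⟨1, by push_cast; exact h1, by omega⟩
    | 2 => exact ⟨b, by push_cast; exact hb, fun _ => dvd_refl b⟩
    | 3 => exact ⟨c0, by push_cast; exact hc, by omega⟩
    | 4 => exact ⟨b * d0, by push_cast; exact hd,
        fun _ => Dvd.intro _ rfl⟩
    | (N + 5) =>
      rcases Nat.even_or_odd (N + 5) with ⟨m, hm⟩ | ⟨m, hm⟩
      · -- even case : N + 5 = m + m, m ≥ 3
        have hm3 : 3 ≤ m := by omega
        obtain ⟨zm, hzm, hpm⟩ := ih m (by omega)
        obtain ⟨z1, hz1, hp1⟩ := ih (m - 1) (by omega)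
        obtain ⟨z2, hz2, hp2⟩ := ih (m - 2) (by omega)
        obtain ⟨z3, hz3, hp3⟩ := ih (m + 1) (by omega)
        obtain ⟨z4, hz4, hp4⟩ := ih (m + 2) (by omega)
        rw [show ((m - 1 : ℕ) : ℤ) = (m : ℤ) - 1 by omega] at hz1
        rw [show ((m - 2 : ℕ) : ℤ) = (m : ℤ) - 2 by omega] at hz2
        rw [show ((m + 1 : ℕ) : ℤ) = (m : ℤ) + 1 by push_cast; ring] at hz3
        rw [show ((m + 2 : ℕ) : ℤ) = (m : ℤ) + 2 by push_cast; ring] at hz4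
        have hrev := eds_reven a hankel (m : ℤ)
        rw [show 2 * (m : ℤ) = ((N + 5 : ℕ) : ℤ) by omega, hzm, hz1, hz2, hz3, hz4, hb] at hrev
        rcases Nat.even_or_odd m with ⟨t, ht⟩ | ⟨t, ht⟩
        · obtain ⟨wm, rfl⟩ := hpm ⟨t, by omega⟩
          obtain ⟨u2, rfl⟩ := hp2 ⟨t - 1, by omega⟩
          obtain ⟨u4, rfl⟩ := hp4 ⟨t + 1, by omega⟩
          refine ⟨b * (wm * (z1 ^ 2 * u4 - u2 * z3 ^ 2)), ?_, fun _ => Dvd.intro _ rfl⟩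
          have heq : a ((N + 5 : ℕ) : ℤ) * (b : ℚ)
              = ((b * (wm * (z1 ^ 2 * u4 - u2 * z3 ^ 2)) : ℤ) : ℚ) * (b : ℚ) := by
            push_cast at hrev ⊢
            linear_combination hrev
          exact mul_right_cancel₀ hbne heq
        · obtain ⟨u1, rfl⟩ := hp1 ⟨t, by omega⟩
          obtain ⟨u3, rfl⟩ := hp3 ⟨t + 1, by omega⟩
          refine ⟨b * (zm * (u1 ^ 2 * z4 - z2 * u3 ^ 2)), ?_, fun _ => Dvd.intro _ rfl⟩
          have heq : a ((N + 5 : ℕ) : ℤ) * (b : ℚ)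
              = ((b * (zm * (u1 ^ 2 * z4 - z2 * u3 ^ 2)) : ℤ) : ℚ) * (b : ℚ) := by
            push_cast at hrev ⊢
            linear_combination hrev
          exact mul_right_cancel₀ hbne heq
      · -- odd case : N + 5 = 2 * m + 1, m ≥ 2
        have hm2 : 2 ≤ m := by omega
        obtain ⟨zm, hzm, -⟩ := ih m (by omega)
        obtain ⟨z1, hz1, -⟩ := ih (m - 1) (by omega)
        obtain ⟨z3, hz3, -⟩ := ih (m + 1) (by omega)
        obtain ⟨z4, hz4, -⟩ := ih (m + 2) (by omega)
        rw [show ((m - 1 : ℕ) : ℤ) = (m : ℤ) - 1 by omega] at hz1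
        rw [show ((m + 1 : ℕ) : ℤ) = (m : ℤ) + 1 by push_cast; ring] at hz3
        rw [show ((m + 2 : ℕ) : ℤ) = (m : ℤ) + 2 by push_cast; ring] at hz4
        have hro := eds_rodd a hankel h1 (m : ℤ)
        rw [show 2 * (m : ℤ) + 1 = ((N + 5 : ℕ) : ℤ) by omega, hzm, hz1, hz3, hz4] at hro
        refine ⟨z4 * zm ^ 3 - z1 * z3 ^ 3, ?_, by omega⟩
        rw [hro]; push_cast; ring

private lemma eds_intZ (a : ℤ → ℚ)
    (hankel : ∀ m n : ℤ, a (n + m) * a (n - m)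
      = (a m) ^ 2 * (a (n + 1) * a (n - 1)) - a (m + 1) * a (m - 1) * (a n) ^ 2)
    (h0 : a 0 = 0) (h1 : a 1 = 1) (h2ne : a 2 ≠ 0)
    (haneg : ∀ k : ℤ, a (-k) = -a k)
    (b c0 d0 : ℤ) (hb : a 2 = (b : ℚ)) (hc : a 3 = (c0 : ℚ)) (hd : a 4 = (b : ℚ) * (d0 : ℚ)) :
    ∀ s : ℤ, ∃ z : ℤ, a s = (z : ℚ) ∧ (2 ∣ s → b ∣ z) := by
  intro s
  rcases le_or_gt 0 s with hs | hs
  · obtain ⟨t, ht⟩ := Int.le.dest hs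
    rw [zero_add] at ht
    obtain ⟨z, hz, hpz⟩ := eds_intN a hankel h0 h1 h2ne b c0 d0 hb hc hd t
    rw [ht] at hz
    exact ⟨z, hz, fun hdv => hpz (by omega)⟩
  · obtain ⟨t, ht⟩ := Int.le.dest (show 0 ≤ -s by omega)
    rw [zero_add] at ht
    obtain ⟨z, hz, hpz⟩ := eds_intN a hankel h0 h1 h2ne b c0 d0 hb hc hd t
    refine ⟨-z, ?_, fun hdv => ?_⟩
    · rw [show s = -(t : ℤ) by omega, haneg, hz]; push_cast; ring
    · have := hpz (by omega)
      exact Dvd.dvd.neg_right this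
  




private lemma eds_double (a : ℤ → ℚ)
    (hankel : ∀ m n : ℤ, a (n + m) * a (n - m)
      = (a m) ^ 2 * (a (n + 1) * a (n - 1)) - a (m + 1) * a (m - 1) * (a n) ^ 2)
    (h0 : a 0 = 0) (h1 : a 1 = 1) (h2ne : a 2 ≠ 0)
    (haneg : ∀ k : ℤ, a (-k) = -a k)
    (b c0 d0 : ℤ) (hb : a 2 = (b : ℚ)) (hc : a 3 = (c0 : ℚ)) (hd : a 4 = (b : ℚ) * (d0 : ℚ))
    (m : ℤ) : ∃ cc : ℤ, a (2 * m) = a m * (cc : ℚ) := by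
  have hbne : (b : ℚ) ≠ 0 := by rw [← hb]; exact h2ne
  have aint := eds_intZ a hankel h0 h1 h2ne haneg b c0 d0 hb hc hd
  obtain ⟨zm, hzm, hpm⟩ := aint m
  obtain ⟨z1, hz1, hp1⟩ := aint (m - 1)
  obtain ⟨z2, hz2, hp2⟩ := aint (m - 2)
  obtain ⟨z3, hz3, hp3⟩ := aint (m + 1)
  obtain ⟨z4, hz4, hp4⟩ := aint (m + 2)
  have hrev := eds_reven a hankel m
  rw [hzm, hz1, hz2, hz3, hz4, hb] at hrev
  rcases Int.even_or_odd m with ⟨t, ht⟩ | ⟨t, ht⟩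
  · obtain ⟨u2, rfl⟩ := hp2 ⟨t - 1, by omega⟩
    obtain ⟨u4, rfl⟩ := hp4 ⟨t + 1, by omega⟩
    refine ⟨z1 ^ 2 * u4 - u2 * z3 ^ 2, ?_⟩
    have heq : a (2 * m) * (b : ℚ)
        = (a m * ((z1 ^ 2 * u4 - u2 * z3 ^ 2 : ℤ) : ℚ)) * (b : ℚ) := by
      rw [hzm]; push_cast at hrev ⊢; linear_combination hrev
    exact mul_right_cancel₀ hbne heq
  · obtain ⟨u1, rfl⟩ := hp1 ⟨t, by omega⟩
    obtain ⟨u3, rfl⟩ := hp3 ⟨t + 1, by omega⟩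
    refine ⟨b * (u1 ^ 2 * z4 - z2 * u3 ^ 2), ?_⟩
    have heq : a (2 * m) * (b : ℚ)
        = (a m * ((b * (u1 ^ 2 * z4 - z2 * u3 ^ 2) : ℤ) : ℚ)) * (b : ℚ) := by
      rw [hzm]; push_cast at hrev ⊢; linear_combination hrev
    exact mul_right_cancel₀ hbne heq

private lemma eds_main (a : ℤ → ℚ)
    (hankel : ∀ m n : ℤ, a (n + m) * a (n - m)
      = (a m) ^ 2 * (a (n + 1) * a (n - 1)) - a (m + 1) * a (m - 1) * (a n) ^ 2)
    (h0 : a 0 = 0) (h1 : a 1 = 1) (h2ne : a 2 ≠ 0)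
    (haneg : ∀ k : ℤ, a (-k) = -a k)
    (b c0 d0 : ℤ) (hb : a 2 = (b : ℚ)) (hc : a 3 = (c0 : ℚ)) (hd : a 4 = (b : ℚ) * (d0 : ℚ)) :
    ∀ K : ℕ, ∀ n : ℤ, 1 ≤ n → ∃ c : ℤ, a (n * K) = a n * (c : ℚ) := by
  have aint := eds_intZ a hankel h0 h1 h2ne haneg b c0 d0 hb hc hd
  intro K
  induction K using Nat.strong_induction_on with
  | _ K ih =>
    intro n hn1
    match K with
    | 0 => exact ⟨0, by push_cast; simp [h0]⟩
    | 1 => exact ⟨1, by push_cast; simp⟩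
    | (K + 2) =>
      rcases Nat.even_or_odd (K + 2) with ⟨J, hJ⟩ | ⟨J, hJ⟩
      · -- even
        obtain ⟨c2, hc2⟩ := ih J (by omega) n hn1
        obtain ⟨c1, hc1⟩ := eds_double a hankel h0 h1 h2ne haneg b c0 d0 hb hc hd (n * (J : ℤ))
        refine ⟨c2 * c1, ?_⟩
        have hidx : n * ((K + 2 : ℕ) : ℤ) = 2 * (n * (J : ℤ)) := by
          have : ((K + 2 : ℕ) : ℤ) = 2 * (J : ℤ) := by omega
          rw [this]; ring
        rw [hidx, hc1, hc2]; push_cast; ring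
      · -- odd : K + 2 = 2J + 1, J ≥ 1
        have hJ1 : 1 ≤ J := by omega
        by_cases hz : a n = 0
        · refine ⟨0, ?_⟩
          have hn3 : 3 ≤ n := by
            rcases eq_or_lt_of_le hn1 with h' | h'
            · exfalso; rw [← h', h1] at hz; norm_num at hz
            · rcases eq_or_lt_of_le (show (2:ℤ) ≤ n by omega) with h'' | h''
              · exfalso; rw [← h''] at hz; exact h2ne hz
              · omega
          rw [eds_zmul a hankel h0 h1 h2ne haneg n hn3 hz (K + 2), hz, zero_mul]
        · obtain ⟨u, hu⟩ := ih J (by omega) n hn1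
          obtain ⟨v, hv⟩ := ih (J + 1) (by omega) n hn1
          push_cast at hv
          obtain ⟨p1, hp1, -⟩ := aint (n * ((J : ℤ) + 1) + 1)
          obtain ⟨p2, hp2, -⟩ := aint (n * ((J : ℤ) + 1) - 1)
          obtain ⟨r1, hr1, -⟩ := aint (n * (J : ℤ) + 1)
          obtain ⟨r2, hr2, -⟩ := aint (n * (J : ℤ) - 1)
          have h := hankel (n * (J : ℤ)) (n * ((J : ℤ) + 1))
          rw [show n * ((J : ℤ) + 1) + n * (J : ℤ) = n * ((K + 2 : ℕ) : ℤ) by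
                have : ((K + 2 : ℕ) : ℤ) = 2 * (J : ℤ) + 1 := by omega
                rw [this]; ring,
            show n * ((J : ℤ) + 1) - n * (J : ℤ) = n by ring,
            hu, hv, hp1, hp2, hr1, hr2] at h
          refine ⟨u ^ 2 * (p1 * p2) - r1 * r2 * v ^ 2, ?_⟩
          have heq : a (n * ((K + 2 : ℕ) : ℤ)) * a n
              = (a n * ((u ^ 2 * (p1 * p2) - r1 * r2 * v ^ 2 : ℤ) : ℚ)) * a n := by
            push_cast at h ⊢; linear_combination h
          exact mul_right_cancel₀ hz heq


end EDSAux

/-- An elliptic divisibility sequence as in Statement 17 has the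
divisibility property: for integers `m, n ≥ 1`, if `n ∣ m` then `a n` divides `a m`
in the integers. -/
theorem eds_divisibility (a : ℤ → ℚ)
    (hankel : ∀ m n : ℤ, a (n + m) * a (n - m)
      = (a m) ^ 2 * (a (n + 1) * a (n - 1)) - a (m + 1) * a (m - 1) * (a n) ^ 2)
    (h0 : a 0 = 0) (h1 : a 1 = 1)
    (h2 : ∃ z : ℤ, a 2 = (z : ℚ)) (h3 : ∃ z : ℤ, a 3 = (z : ℚ))
    (h4 : ∃ z : ℤ, a 4 = (z : ℚ))
    (h2ne : a 2 ≠ 0)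
    (hdvd : ∃ c : ℤ, a 4 = a 2 * (c : ℚ)) :
    ∀ m n : ℤ, 1 ≤ m → 1 ≤ n → n ∣ m → ∃ c : ℤ, a m = a n * (c : ℚ) := by
  obtain ⟨b, hb⟩ := h2
  obtain ⟨c0, hc⟩ := h3
  obtain ⟨d0, hd'⟩ := hdvd
  rw [hb] at hd'
  have haneg := eds_neg a hankel h1 h2ne
  intro m n hm hn hdv
  obtain ⟨k, hk⟩ := hdv
  have hk0 : 0 ≤ k := by
    by_contra hneg
    push_neg at hneg
    nlinarith
  obtain ⟨K, hK⟩ := Int.le.dest hk0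
  rw [zero_add] at hK
  obtain ⟨c, hcc⟩ := eds_main a hankel h0 h1 h2ne haneg b c0 d0 hb hc hd' K n hn
  exact ⟨c, by rw [hk, ← hK]; exact hcc⟩
end
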